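/- In the modified AKV model: (iii) every vector w ∈ W_D that is orthogonal to e_0 belongs to V; (iv) V ∩ W_D^⊥ is the orthogonal direct sum of Im|Z| ∩ {ψ, Z*ψ'}^⊥ and ran P_3 ∩ {ψ', Zψ}^⊥, i.e., V ∩ W_D^⊥ = (Im|Z| ∩ {ψ, Z*ψ'}^⊥) ⊕ (ran P_3 ∩ {ψ', Zψ}^⊥). -/

import Mathlib

noncomputable section

open ContinuousLinearMap Finset
open scoped InnerProductSpace

/-- The Hilbert space ℂ^(N+M+1) of the modified AKV model. -/
abbrev AKVSpace (N M : ℕ) := EuclideanSpace ℂ (Fin (N + M + 1))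

namespace AKV

variable (N M : ℕ)

/-- standard basis vector -/
def ket (i : Fin (N + M + 1)) : AKVSpace N M := EuclideanSpace.single i 1

/-- rank-one operator |u⟩⟨v| : x ↦ ⟪v, x⟫ • u -/
def ketbra (u v : AKVSpace N M) : AKVSpace N M →L[ℂ] AKVSpace N M :=
  (innerSL ℂ v).smulRight u

/-- indices 2,…,N of the second level -/
def idx2 : Finset (Fin (N + M + 1)) := univ.filter fun i => 2 ≤ (i : ℕ) ∧ (i : ℕ) ≤ N
/-- indices N+1,…,N+M of the third level -/
def idx3 : Finset (Fin (N + M + 1)) := univ.filter fun i => N + 1 ≤ (i : ℕ)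

/-- orthogonal projection onto span{e_0} -/
def P0 : AKVSpace N M →L[ℂ] AKVSpace N M := ketbra N M (ket N M 0) (ket N M 0)
/-- orthogonal projection onto span{e_1} -/
def P1 : AKVSpace N M →L[ℂ] AKVSpace N M := ketbra N M (ket N M 1) (ket N M 1)
/-- orthogonal projection onto span{e_2,…,e_N} -/
def P2 : AKVSpace N M →L[ℂ] AKVSpace N M := ∑ i ∈ idx2 N M, ketbra N M (ket N M i) (ket N M i)
/-- orthogonal projection onto span{e_{N+1},…,e_{N+M}} -/
def P3 : AKVSpace N M →L[ℂ] AKVSpace N M := ∑ i ∈ idx3 N M, ketbra N M (ket N M i) (ket N M i)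

/-- ψ = e_2 + ⋯ + e_N -/
def psi : AKVSpace N M := ∑ i ∈ idx2 N M, ket N M i
/-- ψ' = e_{N+1} + ⋯ + e_{N+M} -/
def psi' : AKVSpace N M := ∑ i ∈ idx3 N M, ket N M i

/-- |Z| = Z⋆Z -/
def absZ (Z : AKVSpace N M →L[ℂ] AKVSpace N M) : AKVSpace N M →L[ℂ] AKVSpace N M :=
  adjoint Z * Z

/-- hypotheses on the interference operator Z of the modified AKV model -/
def IsAKVZ (hM : 1 ≤ M) (Z : AKVSpace N M →L[ℂ] AKVSpace N M) : Prop :=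
  Z = P3 N M * Z * P2 N M ∧
  Z * adjoint Z = P3 N M ∧
  Z (ket N M ⟨N - 1, by omega⟩) = ((Real.sqrt ((N : ℝ) - 1))⁻¹ : ℂ) • psi' N M ∧
  adjoint Z (ket N M ⟨N + 1, by omega⟩) = ((Real.sqrt ((N : ℝ) - 1))⁻¹ : ℂ) • psi N M

/-- the five Kraus operators -/
def kraus (Γ1m Γ1p Γ2m Γ2p Γ3m : ℝ) (Z : AKVSpace N M →L[ℂ] AKVSpace N M) :
    Fin 5 → AKVSpace N M →L[ℂ] AKVSpace N M :=
  ![((Real.sqrt (2 * Γ1m) : ℝ) : ℂ) • ketbra N M (psi N M) (ket N M 1),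
    ((Real.sqrt (2 * ((N : ℝ) - 1) * Γ2m) : ℝ) : ℂ) • Z,
    ((Real.sqrt (2 * Γ3m) : ℝ) : ℂ) • ketbra N M (ket N M 0) (psi' N M),
    ((Real.sqrt (2 * Γ1p) : ℝ) : ℂ) • ketbra N M (ket N M 1) (psi N M),
    ((Real.sqrt (2 * ((N : ℝ) - 1) * Γ2p) : ℝ) : ℂ) • adjoint Z]

/-- the effective Hamiltonian -/
def Heff (γ1m γ1p γ2m γ2p γ3m : ℝ) (Z : AKVSpace N M →L[ℂ] AKVSpace N M) :
    AKVSpace N M →L[ℂ] AKVSpace N M :=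
  (γ1p : ℂ) • ketbra N M (psi N M) (psi N M)
    - (((N : ℂ) - 1) * (γ1m : ℂ)) • ketbra N M (ket N M 1) (ket N M 1)
    + (((N : ℂ) - 1) * (γ2p : ℂ)) • P3 N M
    - (((N : ℂ) - 1) * (γ2m : ℂ)) • absZ N M Z
    - (γ3m : ℂ) • ketbra N M (psi' N M) (psi' N M)

/-- the predual GKSL generator ℒ_* of the modified AKV model -/
def Lstar (Γ1m Γ1p Γ2m Γ2p Γ3m γ1m γ1p γ2m γ2p γ3m : ℝ)
    (Z ρ : AKVSpace N M →L[ℂ] AKVSpace N M) : AKVSpace N M →L[ℂ] AKVSpace N M :=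
  -Complex.I • (Heff N M γ1m γ1p γ2m γ2p γ3m Z * ρ - ρ * Heff N M γ1m γ1p γ2m γ2p γ3m Z)
    + ∑ k : Fin 5,
        (kraus N M Γ1m Γ1p Γ2m Γ2p Γ3m Z k * ρ * adjoint (kraus N M Γ1m Γ1p Γ2m Γ2p Γ3m Z k)
          - (1 / 2 : ℂ) • (adjoint (kraus N M Γ1m Γ1p Γ2m Γ2p Γ3m Z k) *
                kraus N M Γ1m Γ1p Γ2m Γ2p Γ3m Z k * ρ
              + ρ * (adjoint (kraus N M Γ1m Γ1p Γ2m Γ2p Γ3m Z k) *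
                kraus N M Γ1m Γ1p Γ2m Γ2p Γ3m Z k)))

/-- a state: positive semidefinite with trace one -/
def IsState (ρ : AKVSpace N M →L[ℂ] AKVSpace N M) : Prop :=
  ρ.IsPositive ∧ LinearMap.trace ℂ (AKVSpace N M) ↑ρ = 1

/-- the interaction-free subspace W_D -/
def WD (Z : AKVSpace N M →L[ℂ] AKVSpace N M) : Submodule ℂ (AKVSpace N M) :=
  (Submodule.span ℂ {ket N M 1, psi N M, psi' N M})ᗮ ⊓
    LinearMap.ker (Z : AKVSpace N M →ₗ[ℂ] AKVSpace N M) ⊓ LinearMap.ker ((adjoint Z : AKVSpace N M →L[ℂ] AKVSpace N M) : AKVSpace N M →ₗ[ℂ] AKVSpace N M)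

/-- the subspace V = {e_0, e_1, ψ, ψ', Zψ, Z⋆ψ'}^⊥ -/
def Vsub (Z : AKVSpace N M →L[ℂ] AKVSpace N M) : Submodule ℂ (AKVSpace N M) :=
  (Submodule.span ℂ
    {ket N M 0, ket N M 1, psi N M, psi' N M, Z (psi N M), adjoint Z (psi' N M)})ᗮ

/-- Im|Z| ∩ {ψ, Z⋆ψ'}^⊥ -/
def subA (Z : AKVSpace N M →L[ℂ] AKVSpace N M) : Submodule ℂ (AKVSpace N M) :=
  LinearMap.range ((absZ N M Z : AKVSpace N M →L[ℂ] AKVSpace N M) : AKVSpace N M →ₗ[ℂ] AKVSpace N M) ⊓ (Submodule.span ℂ {psi N M, adjoint Z (psi' N M)})ᗮ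

/-- ran P₃ ∩ {ψ', Zψ}^⊥ -/
def subB (Z : AKVSpace N M →L[ℂ] AKVSpace N M) : Submodule ℂ (AKVSpace N M) :=
  LinearMap.range ((P3 N M : AKVSpace N M →L[ℂ] AKVSpace N M) : AKVSpace N M →ₗ[ℂ] AKVSpace N M) ⊓ (Submodule.span ℂ {psi' N M, Z (psi N M)})ᗮ

/-- the orthogonal projection onto a subspace, as an operator on the whole space -/
def projOp (U : Submodule ℂ (AKVSpace N M)) : AKVSpace N M →L[ℂ] AKVSpace N M :=
  U.subtypeL ∘L U.orthogonalProjectionOnto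

end AKV

/-!
Off `{e₀, e₁}`, `P₂` and `P₃` are complementary coordinate projections, and `Z = P₃ Z P₂` with
`Z Z⋆ = P₃` gives `P₃ Z = Z`, `P₂ Z⋆ = Z⋆` and `P₂ Z = 0 = P₃ Z⋆`. Hence a vector `x` of
`V ∩ W_D^⊥` splits as `P₂ x + P₃ x`, and the orthogonality conditions defining `V` pass to the two
pieces. The one non-formal point is `P₂ x ∈ Im|Z|`: in finite dimension
`Im|Z| = Im Z⋆ = (ker Z)^⊥`, and `P₂` maps `ker Z` into `W_D` because
`ψ = √(N-1) Z⋆ e_{N+1} ∈ Im Z⋆` is orthogonal to `ker Z`.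
-/

theorem Fin.val_one_le_one (n : ℕ) : ((1 : Fin (n + 1)) : ℕ) ≤ 1 := by
  rw [Fin.val_one']
  exact Nat.mod_le 1 _

section OrthogonalSpan

variable {𝕜 E : Type*} [RCLike 𝕜] [NormedAddCommGroup E] [InnerProductSpace 𝕜 E]

theorem Submodule.mem_orthogonal_span_iff {S : Set E} {x : E} :
    x ∈ (span 𝕜 S)ᗮ ↔ ∀ s ∈ S, ⟪s, x⟫_𝕜 = 0 := by
  refine ⟨fun hx s hs => hx s (subset_span hs), fun h u hu => ?_⟩
  induction hu using span_induction with
  | mem y hy => exact h y hy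
  | zero => exact inner_zero_left x
  | add a b _ _ ha hb => rw [inner_add_left, ha, hb, add_zero]
  | smul c a _ ha => rw [inner_smul_left, ha, mul_zero]

end OrthogonalSpan

namespace ContinuousLinearMap

variable {𝕜 E : Type*} [RCLike 𝕜] [NormedAddCommGroup E] [InnerProductSpace 𝕜 E]
  {P Q Z : E →L[𝕜] E}

theorem mul_eq_self_of_eq_mul_mul (hQ : IsIdempotentElem Q) (hZ : Z = Q * Z * P) :
    Q * Z = Z := by
  rw [hZ, ← mul_assoc, ← mul_assoc, hQ.eq]

theorem mul_eq_self_of_eq_mul_mul_right (hP : IsIdempotentElem P) (hZ : Z = Q * Z * P) :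
    Z * P = Z := by
  rw [hZ, mul_assoc, hP.eq]

theorem mul_eq_zero_of_eq_mul_mul (hPQ : P * Q = 0) (hZ : Z = Q * Z * P) : P * Z = 0 := by
  rw [hZ, ← mul_assoc, ← mul_assoc, hPQ, zero_mul, zero_mul]

variable [CompleteSpace E]

theorem inner_apply_right_of_isSelfAdjoint (hP : IsSelfAdjoint P) (u x : E) :
    ⟪u, P x⟫_𝕜 = ⟪P u, x⟫_𝕜 := by
  rw [← adjoint_inner_left, hP.adjoint_eq]

theorem inner_apply_left_of_apply_eq_self (hP : IsSelfAdjoint P) {x : E}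
    (hx : P x = x) (v : E) : ⟪P v, x⟫_𝕜 = ⟪v, x⟫_𝕜 := by
  rw [← inner_apply_right_of_isSelfAdjoint hP, hx]

theorem mul_adjoint_eq_adjoint_of_eq_mul_mul (hP : IsStarProjection P) (hZ : Z = Q * Z * P) :
    P * adjoint Z = adjoint Z := by
  have h := congrArg star (mul_eq_self_of_eq_mul_mul_right hP.isIdempotentElem hZ)
  rwa [star_mul, hP.isSelfAdjoint.star_eq, star_eq_adjoint] at h

theorem mul_adjoint_eq_zero_of_eq_mul_mul (hP : IsStarProjection P) (hQP : Q * P = 0)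
    (hZ : Z = Q * Z * P) : Q * adjoint Z = 0 := by
  rw [← mul_adjoint_eq_adjoint_of_eq_mul_mul hP hZ, ← mul_assoc, hQP, zero_mul]

theorem adjoint_mul_eq_zero_of_eq_mul_mul (hP : IsSelfAdjoint P) (hPQ : P * Q = 0)
    (hZ : Z = Q * Z * P) : adjoint Z * P = 0 := by
  have h := congrArg star (mul_eq_zero_of_eq_mul_mul hPQ hZ)
  rwa [star_mul, hP.star_eq, star_eq_adjoint, star_zero] at h

variable [FiniteDimensional 𝕜 E]

theorem orthogonal_ker_eq_range_adjoint (Z : E →L[𝕜] E) :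
    (LinearMap.ker (Z : E →ₗ[𝕜] E))ᗮ = LinearMap.range (adjoint Z : E →ₗ[𝕜] E) := by
  rw [LinearMap.orthogonal_ker, adjoint_toLinearMap]

theorem range_adjoint_mul_self (Z : E →L[𝕜] E) :
    LinearMap.range ((adjoint Z * Z : E →L[𝕜] E) : E →ₗ[𝕜] E) =
      LinearMap.range (adjoint Z : E →ₗ[𝕜] E) := by
  rw [mul_def, toLinearMap_comp, ← adjoint_toLinearMap, LinearMap.range_adjoint_comp_self]

end ContinuousLinearMap

namespace AKV

variable {N M : ℕ}

theorem inner_ket_left (i : Fin (N + M + 1)) (x : AKVSpace N M) : ⟪ket N M i, x⟫_ℂ = x i := by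
  simp [ket, EuclideanSpace.inner_single_left]

theorem ket_apply (i j : Fin (N + M + 1)) : ket N M i j = if j = i then 1 else 0 := by
  simp [ket]

theorem sum_ketbra_apply (s : Finset (Fin (N + M + 1))) (x : AKVSpace N M) (j : Fin (N + M + 1)) :
    (∑ i ∈ s, ketbra N M (ket N M i) (ket N M i)) x j = if j ∈ s then x j else 0 := by
  simp [ketbra, inner_ket_left, ket_apply]

theorem P2_apply (x : AKVSpace N M) (j : Fin (N + M + 1)) :
    P2 N M x j = if j ∈ idx2 N M then x j else 0 :=
  sum_ketbra_apply _ x j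

theorem P3_apply (x : AKVSpace N M) (j : Fin (N + M + 1)) :
    P3 N M x j = if j ∈ idx3 N M then x j else 0 :=
  sum_ketbra_apply _ x j

theorem psi_apply (j : Fin (N + M + 1)) : psi N M j = if j ∈ idx2 N M then 1 else 0 := by
  simp [psi, ket_apply]

theorem psi'_apply (j : Fin (N + M + 1)) : psi' N M j = if j ∈ idx3 N M then 1 else 0 := by
  simp [psi', ket_apply]

theorem mem_idx2 {i : Fin (N + M + 1)} : i ∈ idx2 N M ↔ 2 ≤ (i : ℕ) ∧ (i : ℕ) ≤ N := by
  simp [idx2]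

theorem mem_idx3 {i : Fin (N + M + 1)} : i ∈ idx3 N M ↔ N + 1 ≤ (i : ℕ) := by
  simp [idx3]

theorem isStarProjection_sum_ketbra (s : Finset (Fin (N + M + 1))) :
    IsStarProjection (∑ i ∈ s, ketbra N M (ket N M i) (ket N M i)) := by
  refine ⟨?_, ?_⟩
  · ext x j
    simp only [mul_apply_eq_comp, sum_ketbra_apply]
    split_ifs <;> rfl
  · refine isSelfAdjoint_sum (R := AKVSpace N M →L[ℂ] AKVSpace N M) s fun i _ => ?_
    rw [isSelfAdjoint_iff', ketbra, ← InnerProductSpace.rankOne_def,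
      InnerProductSpace.adjoint_rankOne]

theorem isStarProjection_P2 : IsStarProjection (P2 N M) := isStarProjection_sum_ketbra _

theorem isStarProjection_P3 : IsStarProjection (P3 N M) := isStarProjection_sum_ketbra _

theorem P2_mul_P3 : P2 N M * P3 N M = 0 := by
  ext x j
  simp only [mul_apply_eq_comp, P2_apply, P3_apply, mem_idx2, mem_idx3, zero_apply,
    PiLp.zero_apply]
  split_ifs <;> first | rfl | omega

theorem P3_mul_P2 : P3 N M * P2 N M = 0 := by
  ext x j
  simp only [mul_apply_eq_comp, P2_apply, P3_apply, mem_idx2, mem_idx3, zero_apply,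
    PiLp.zero_apply]
  split_ifs <;> first | rfl | omega

theorem P2_ket_zero : P2 N M (ket N M 0) = 0 := by
  ext j
  simp only [P2_apply, ket_apply, mem_idx2, PiLp.zero_apply]
  split_ifs with h h' <;> first | rfl | (subst h'; simp at h)

theorem P3_ket_zero : P3 N M (ket N M 0) = 0 := by
  ext j
  simp only [P3_apply, ket_apply, mem_idx3, PiLp.zero_apply]
  split_ifs with h h' <;> first | rfl | (subst h'; simp at h)

theorem P2_ket_one : P2 N M (ket N M 1) = 0 := by
  ext j
  simp only [P2_apply, ket_apply, mem_idx2, PiLp.zero_apply]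
  split_ifs with h h' <;> first | rfl | (subst h'; have := Fin.val_one_le_one (N + M); omega)

theorem P3_ket_one (hN : 1 ≤ N) : P3 N M (ket N M 1) = 0 := by
  ext j
  simp only [P3_apply, ket_apply, mem_idx3, PiLp.zero_apply]
  split_ifs with h h' <;> first | rfl | (subst h'; have := Fin.val_one_le_one (N + M); omega)

theorem P2_psi : P2 N M (psi N M) = psi N M := by
  ext j
  simp only [P2_apply, psi_apply]
  split_ifs <;> rfl

theorem P3_psi' : P3 N M (psi' N M) = psi' N M := by
  ext j
  simp only [P3_apply, psi'_apply]
  split_ifs <;> rfl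

theorem P3_psi : P3 N M (psi N M) = 0 := by
  ext j
  simp only [P3_apply, psi_apply, mem_idx2, mem_idx3, PiLp.zero_apply]
  split_ifs <;> first | rfl | omega

theorem P2_psi' : P2 N M (psi' N M) = 0 := by
  ext j
  simp only [P2_apply, psi'_apply, mem_idx2, mem_idx3, PiLp.zero_apply]
  split_ifs <;> first | rfl | omega

theorem P2_add_P3 (hNM : 1 ≤ N + M) {x : AKVSpace N M} (h0 : ⟪ket N M 0, x⟫_ℂ = 0)
    (h1 : ⟪ket N M 1, x⟫_ℂ = 0) : P2 N M x + P3 N M x = x := by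
  rw [inner_ket_left] at h0 h1
  ext j
  simp only [PiLp.add_apply, P2_apply, P3_apply, mem_idx2, mem_idx3]
  by_cases hj : (j : ℕ) < 2
  · obtain rfl | rfl : j = 0 ∨ j = 1 := by
      rw [Fin.ext_iff, Fin.ext_iff, Fin.val_one', Nat.mod_eq_of_lt (by omega)]
      simp only [Fin.val_zero]
      omega
    · simp [h0]
    · simp [h1]
  · split_ifs <;> first | omega | simp

theorem inner_P2_right (u x : AKVSpace N M) : ⟪u, P2 N M x⟫_ℂ = ⟪P2 N M u, x⟫_ℂ :=
  inner_apply_right_of_isSelfAdjoint isStarProjection_P2.isSelfAdjoint u x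

theorem inner_P3_right (u x : AKVSpace N M) : ⟪u, P3 N M x⟫_ℂ = ⟪P3 N M u, x⟫_ℂ :=
  inner_apply_right_of_isSelfAdjoint isStarProjection_P3.isSelfAdjoint u x

section Interference

variable {hM : 1 ≤ M} {Z : AKVSpace N M →L[ℂ] AKVSpace N M}

theorem P3_mul_Z (hZ : Z = P3 N M * Z * P2 N M) : P3 N M * Z = Z :=
  mul_eq_self_of_eq_mul_mul isStarProjection_P3.isIdempotentElem hZ

theorem Z_mul_P2 (hZ : Z = P3 N M * Z * P2 N M) : Z * P2 N M = Z :=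
  mul_eq_self_of_eq_mul_mul_right isStarProjection_P2.isIdempotentElem hZ

theorem P2_mul_Z (hZ : Z = P3 N M * Z * P2 N M) : P2 N M * Z = 0 :=
  mul_eq_zero_of_eq_mul_mul P2_mul_P3 hZ

theorem P2_mul_adjoint (hZ : Z = P3 N M * Z * P2 N M) : P2 N M * adjoint Z = adjoint Z :=
  mul_adjoint_eq_adjoint_of_eq_mul_mul isStarProjection_P2 hZ

theorem P3_mul_adjoint (hZ : Z = P3 N M * Z * P2 N M) : P3 N M * adjoint Z = 0 :=
  mul_adjoint_eq_zero_of_eq_mul_mul isStarProjection_P2 P3_mul_P2 hZ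

theorem adjoint_mul_P2 (hZ : Z = P3 N M * Z * P2 N M) : adjoint Z * P2 N M = 0 :=
  adjoint_mul_eq_zero_of_eq_mul_mul isStarProjection_P2.isSelfAdjoint P2_mul_P3 hZ

theorem psi_mem_range_adjoint (hN : 2 ≤ N) (hZ : IsAKVZ N M hM Z) :
    psi N M ∈ LinearMap.range (adjoint Z : AKVSpace N M →ₗ[ℂ] AKVSpace N M) := by
  set c : ℂ := ((Real.sqrt ((N : ℝ) - 1))⁻¹ : ℂ)
  have hc : c ≠ 0 := by
    have : (0 : ℝ) < Real.sqrt ((N : ℝ) - 1) :=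
      Real.sqrt_pos.2 (by linarith [show (2 : ℝ) ≤ N by exact_mod_cast hN])
    simpa [c] using this.ne'
  refine ⟨c⁻¹ • ket N M ⟨N + 1, by omega⟩, ?_⟩
  rw [coe_coe, map_smul, hZ.2.2.2, smul_smul, inv_mul_cancel₀ hc, one_smul]

theorem mem_WD_iff {w : AKVSpace N M} :
    w ∈ WD N M Z ↔ (⟪ket N M 1, w⟫_ℂ = 0 ∧ ⟪psi N M, w⟫_ℂ = 0 ∧ ⟪psi' N M, w⟫_ℂ = 0) ∧
      Z w = 0 ∧ adjoint Z w = 0 := by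
  simp only [WD, Submodule.mem_inf, Submodule.mem_orthogonal_span_iff, Set.forall_mem_insert,
    Set.mem_singleton_iff, forall_eq, LinearMap.mem_ker, coe_coe, and_assoc]

theorem mem_Vsub_iff {w : AKVSpace N M} :
    w ∈ Vsub N M Z ↔ ⟪ket N M 0, w⟫_ℂ = 0 ∧ ⟪ket N M 1, w⟫_ℂ = 0 ∧ ⟪psi N M, w⟫_ℂ = 0 ∧
      ⟪psi' N M, w⟫_ℂ = 0 ∧ ⟪Z (psi N M), w⟫_ℂ = 0 ∧ ⟪adjoint Z (psi' N M), w⟫_ℂ = 0 := by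
  simp only [Vsub, Submodule.mem_orthogonal_span_iff, Set.forall_mem_insert,
    Set.mem_singleton_iff, forall_eq]

theorem mem_subA_iff {x : AKVSpace N M} :
    x ∈ subA N M Z ↔ x ∈ LinearMap.range (absZ N M Z : AKVSpace N M →ₗ[ℂ] AKVSpace N M) ∧
      ⟪psi N M, x⟫_ℂ = 0 ∧ ⟪adjoint Z (psi' N M), x⟫_ℂ = 0 := by
  simp only [subA, Submodule.mem_inf, Submodule.mem_orthogonal_span_iff, Set.forall_mem_insert,
    Set.mem_singleton_iff, forall_eq]

theorem mem_subB_iff {x : AKVSpace N M} :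
    x ∈ subB N M Z ↔ P3 N M x = x ∧ ⟪psi' N M, x⟫_ℂ = 0 ∧ ⟪Z (psi N M), x⟫_ℂ = 0 := by
  simp only [subB, Submodule.mem_inf, Submodule.mem_orthogonal_span_iff, Set.forall_mem_insert,
    Set.mem_singleton_iff, forall_eq,
    LinearMap.IsIdempotentElem.mem_range_iff isStarProjection_P3.isIdempotentElem.toLinearMap,
    coe_coe]

theorem mem_Vsub_of_mem_WD {w : AKVSpace N M} (hw : w ∈ WD N M Z)
    (h0 : ⟪ket N M 0, w⟫_ℂ = 0) : w ∈ Vsub N M Z := by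
  obtain ⟨⟨h1, hψ, hψ'⟩, hZw, hZw'⟩ := mem_WD_iff.1 hw
  refine mem_Vsub_iff.2 ⟨h0, h1, hψ, hψ', ?_, ?_⟩
  · rw [← adjoint_inner_right, hZw', inner_zero_right]
  · rw [adjoint_inner_left, hZw, inner_zero_right]

theorem range_adjoint_le_orthogonal_WD :
    LinearMap.range (adjoint Z : AKVSpace N M →ₗ[ℂ] AKVSpace N M) ≤ (WD N M Z)ᗮ := by
  rintro _ ⟨u, rfl⟩ w hw
  rw [coe_coe, inner_eq_zero_symm, ← adjoint_inner_right, adjoint_adjoint,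
    (mem_WD_iff.1 hw).2.1, inner_zero_right]

theorem range_le_orthogonal_WD :
    LinearMap.range (Z : AKVSpace N M →ₗ[ℂ] AKVSpace N M) ≤ (WD N M Z)ᗮ := by
  rintro _ ⟨u, rfl⟩ w hw
  rw [coe_coe, inner_eq_zero_symm, ← adjoint_inner_right, (mem_WD_iff.1 hw).2.2,
    inner_zero_right]

theorem P2_mem_WD (hN : 2 ≤ N) (hZ : IsAKVZ N M hM Z) {y : AKVSpace N M} (hy : Z y = 0) :
    P2 N M y ∈ WD N M Z := by
  obtain ⟨u, hu⟩ := psi_mem_range_adjoint hN hZ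
  refine mem_WD_iff.2 ⟨⟨?_, ?_, ?_⟩, ?_, ?_⟩
  · rw [inner_P2_right, P2_ket_one, inner_zero_left]
  · rw [inner_P2_right, P2_psi, ← hu, coe_coe, adjoint_inner_left, hy, inner_zero_right]
  · rw [inner_P2_right, P2_psi', inner_zero_left]
  · rw [← mul_apply_eq_comp, Z_mul_P2 hZ.1, hy]
  · rw [← mul_apply_eq_comp, adjoint_mul_P2 hZ.1, zero_apply]

theorem P2_mem_range_absZ (hN : 2 ≤ N) (hZ : IsAKVZ N M hM Z) {x : AKVSpace N M}
    (hx : x ∈ (WD N M Z)ᗮ) :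
    P2 N M x ∈ LinearMap.range (absZ N M Z : AKVSpace N M →ₗ[ℂ] AKVSpace N M) := by
  rw [absZ, range_adjoint_mul_self, ← orthogonal_ker_eq_range_adjoint]
  intro y hy
  rw [inner_P2_right]
  exact hx _ (P2_mem_WD hN hZ hy)

theorem P2_mem_subA (hN : 2 ≤ N) (hZ : IsAKVZ N M hM Z) {x : AKVSpace N M}
    (hx : x ∈ Vsub N M Z ⊓ (WD N M Z)ᗮ) : P2 N M x ∈ subA N M Z := by
  obtain ⟨-, -, hψ, -, -, hZψ'⟩ := mem_Vsub_iff.1 hx.1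
  refine mem_subA_iff.2 ⟨P2_mem_range_absZ hN hZ hx.2, ?_, ?_⟩
  · rw [inner_P2_right, P2_psi, hψ]
  · rw [inner_P2_right, ← mul_apply_eq_comp, P2_mul_adjoint hZ.1, hZψ']

theorem P3_mem_subB (hZ : Z = P3 N M * Z * P2 N M) {x : AKVSpace N M} (hx : x ∈ Vsub N M Z) :
    P3 N M x ∈ subB N M Z := by
  obtain ⟨-, -, -, hψ', hZψ, -⟩ := mem_Vsub_iff.1 hx
  refine mem_subB_iff.2 ⟨?_, ?_, ?_⟩
  · rw [← mul_apply_eq_comp, isStarProjection_P3.isIdempotentElem.eq]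
  · rw [inner_P3_right, P3_psi', hψ']
  · rw [inner_P3_right, ← mul_apply_eq_comp, P3_mul_Z hZ, hZψ]

theorem P2_apply_of_mem_range_absZ (hZ : Z = P3 N M * Z * P2 N M) {x : AKVSpace N M}
    (hx : x ∈ LinearMap.range (absZ N M Z : AKVSpace N M →ₗ[ℂ] AKVSpace N M)) :
    P2 N M x = x := by
  obtain ⟨u, rfl⟩ := hx
  rw [coe_coe, absZ, ← mul_apply_eq_comp, ← mul_assoc, P2_mul_adjoint hZ]

theorem subA_le (hZ : Z = P3 N M * Z * P2 N M) : subA N M Z ≤ Vsub N M Z ⊓ (WD N M Z)ᗮ := by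
  intro x hx
  obtain ⟨hxr, hψ, hZψ'⟩ := mem_subA_iff.1 hx
  have hP2 := inner_apply_left_of_apply_eq_self isStarProjection_P2.isSelfAdjoint
    (P2_apply_of_mem_range_absZ hZ hxr)
  refine ⟨mem_Vsub_iff.2 ⟨?_, ?_, hψ, ?_, ?_, hZψ'⟩, ?_⟩
  · rw [← hP2, P2_ket_zero, inner_zero_left]
  · rw [← hP2, P2_ket_one, inner_zero_left]
  · rw [← hP2, P2_psi', inner_zero_left]
  · rw [← hP2, ← mul_apply_eq_comp, P2_mul_Z hZ, zero_apply, inner_zero_left]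
  · obtain ⟨u, rfl⟩ := hxr
    exact range_adjoint_le_orthogonal_WD ⟨Z u, rfl⟩

theorem subB_le (hN : 1 ≤ N) (hZ : IsAKVZ N M hM Z) :
    subB N M Z ≤ Vsub N M Z ⊓ (WD N M Z)ᗮ := by
  intro y hy
  obtain ⟨hy3, hψ', hZψ⟩ := mem_subB_iff.1 hy
  have hP3 := inner_apply_left_of_apply_eq_self isStarProjection_P3.isSelfAdjoint hy3
  refine ⟨mem_Vsub_iff.2 ⟨?_, ?_, ?_, hψ', hZψ, ?_⟩, ?_⟩
  · rw [← hP3, P3_ket_zero, inner_zero_left]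
  · rw [← hP3, P3_ket_one hN, inner_zero_left]
  · rw [← hP3, P3_psi, inner_zero_left]
  · rw [← hP3, ← mul_apply_eq_comp, P3_mul_adjoint hZ.1, zero_apply, inner_zero_left]
  · rw [← hy3, ← hZ.2.1]
    exact range_le_orthogonal_WD ⟨adjoint Z y, rfl⟩

theorem inner_eq_zero_of_mem_subA_of_mem_subB (hZ : Z = P3 N M * Z * P2 N M)
    {x y : AKVSpace N M} (hx : x ∈ subA N M Z) (hy : y ∈ subB N M Z) : ⟪x, y⟫_ℂ = 0 := by
  rw [← inner_apply_left_of_apply_eq_self isStarProjection_P3.isSelfAdjoint (mem_subB_iff.1 hy).1,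
    ← P2_apply_of_mem_range_absZ hZ (mem_subA_iff.1 hx).1, ← mul_apply_eq_comp, P3_mul_P2,
    zero_apply, inner_zero_left]

end Interference

theorem V_inter_WDperp_decomposition_general
    (N M : ℕ) (hN : 3 ≤ N) (hM1 : 1 ≤ M)
    (Z : AKVSpace N M →L[ℂ] AKVSpace N M) (hZ : IsAKVZ N M hM1 Z) :
    (∀ w ∈ WD N M Z, ⟪ket N M 0, w⟫_ℂ = 0 → w ∈ Vsub N M Z) ∧
    Vsub N M Z ⊓ (WD N M Z)ᗮ = subA N M Z ⊔ subB N M Z ∧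
    (∀ x ∈ subA N M Z, ∀ y ∈ subB N M Z, ⟪x, y⟫_ℂ = 0) := by
  refine ⟨fun w hw h0 => mem_Vsub_of_mem_WD hw h0,
    le_antisymm ?_ (sup_le (subA_le hZ.1) (subB_le (by omega) hZ)),
    fun x hx y hy => inner_eq_zero_of_mem_subA_of_mem_subB hZ.1 hx hy⟩
  intro x hx
  obtain ⟨h0, h1, -⟩ := mem_Vsub_iff.1 hx.1
  rw [← P2_add_P3 (by omega) h0 h1]
  exact Submodule.add_mem_sup (P2_mem_subA (by omega) hZ hx) (P3_mem_subB hZ.1 hx.1)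

/-- In the modified AKV model: (iii) every `w ∈ W_D` orthogonal to `e₀` lies in `V`; (iv)
`V ∩ W_D^⊥` is the orthogonal direct sum of `Im|Z| ∩ {ψ, Z⋆ψ'}^⊥` and
`ran P₃ ∩ {ψ', Zψ}^⊥`. -/
theorem V_inter_WDperp_decomposition
    (N M : ℕ) (hN : 3 ≤ N) (hM1 : 1 ≤ M) (hM2 : M ≤ N - 1)
    (Z : AKVSpace N M →L[ℂ] AKVSpace N M) (hZ : IsAKVZ N M hM1 Z) :
    (∀ w ∈ WD N M Z, ⟪ket N M 0, w⟫_ℂ = 0 → w ∈ Vsub N M Z) ∧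
    Vsub N M Z ⊓ (WD N M Z)ᗮ = subA N M Z ⊔ subB N M Z ∧
    (∀ x ∈ subA N M Z, ∀ y ∈ subB N M Z, ⟪x, y⟫_ℂ = 0) :=
  V_inter_WDperp_decomposition_general N M hN hM1 Z hZ

end AKV
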